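/- arXiv:2403.18925 — 7 statements merged into one kernel-verified Lean document; each statement's English description precedes it below -/
import Mathlib

section
/- Assume E₁ is unrestricted. Then for every operation 𝓘 from E₁ to E₂ there exists a unique map 𝓘* : E₂ → E₁ such that s(𝓘*(a)) = 𝓘(s)(a) for all s ∈ S₁ and a ∈ E₂; moreover 𝓘* is affine: for every finite family a₁, …, aₙ ∈ E₂ and λ₁, …, λₙ ∈ [0,1] with ∑ᵢ λᵢ = 1, one has 𝓘*(∑ᵢ λᵢ • aᵢ) = ∑ᵢ λᵢ • 𝓘*(aᵢ). -/
/-- `S` is a nonempty convex order-determining set of states on the interval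
effect algebra `[0, u]` of `V`. -/
def IsStateSpace {V : Type*} [AddCommGroup V] [PartialOrder V] [IsOrderedAddMonoid V] [Module ℝ V]
    (u : V) (S : Set (V →ₗ[ℝ] ℝ)) : Prop :=
  S.Nonempty ∧
  (∀ s ∈ S, (∀ x : V, 0 ≤ x → 0 ≤ s x) ∧ s u = 1) ∧
  (∀ s ∈ S, ∀ s' ∈ S, ∀ t : ℝ, 0 ≤ t → t ≤ 1 → t • s + (1 - t) • s' ∈ S) ∧
  (∀ v w : V, (∀ s ∈ S, s v ≤ s w) → v ≤ w)

/-- An operation from the effect algebra of `V₁` to that of `V₂`: an affine map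
sending every state in `S₁` to a substate of `S₂`. -/
def IsOperation {V₁ V₂ : Type*} [AddCommGroup V₁] [PartialOrder V₁] [IsOrderedAddMonoid V₁] [Module ℝ V₁]
    [AddCommGroup V₂] [PartialOrder V₂] [IsOrderedAddMonoid V₂] [Module ℝ V₂]
    (S₁ : Set (V₁ →ₗ[ℝ] ℝ)) (S₂ : Set (V₂ →ₗ[ℝ] ℝ))
    (I : (V₁ →ₗ[ℝ] ℝ) → (V₂ →ₗ[ℝ] ℝ)) : Prop :=
  (∀ s ∈ S₁, ∃ lam : ℝ, 0 ≤ lam ∧ lam ≤ 1 ∧ ∃ t ∈ S₂, I s = lam • t) ∧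
  (∀ s ∈ S₁, ∀ s' ∈ S₁, ∀ t : ℝ, 0 ≤ t → t ≤ 1 →
    I (t • s + (1 - t) • s') = t • I s + (1 - t) • I s')

/-!
Since `E₁` is unrestricted, for each effect `a ∈ E₂` the affine `[0,1]`-valued function
`s ↦ 𝓘(s)(a)` on `S₁` is `s ↦ s(b)` for some effect `b ∈ E₁`, and `b` is unique because `S₁`
is order-determining; this forces `𝓘*(a) = b`. Taking `𝓘*(a)` to be such a representative for
every `a ∈ V₂` that has one, `𝓘*` commutes with all linear combinations of effects, since each
`𝓘(s)` is linear.
-/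

section StateSpace

variable {V : Type*} [AddCommGroup V] [PartialOrder V] [Module ℝ V]

def IsOrderDetermining (S : Set (V →ₗ[ℝ] ℝ)) : Prop :=
  ∀ v w : V, (∀ s ∈ S, s v ≤ s w) → v ≤ w

lemma IsOrderDetermining.eq_of_forall_apply_eq {S : Set (V →ₗ[ℝ] ℝ)} (hS : IsOrderDetermining S)
    {x y : V} (h : ∀ s ∈ S, s x = s y) : x = y :=
  le_antisymm (hS x y fun s hs => (h s hs).le) (hS y x fun s hs => (h s hs).ge)

open Classical in
noncomputable def representative (S : Set (V →ₗ[ℝ] ℝ)) (f : (V →ₗ[ℝ] ℝ) → ℝ) : V :=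
  if h : ∃ b : V, ∀ s ∈ S, s b = f s then h.choose else 0

lemma IsOrderDetermining.representative_eq {S : Set (V →ₗ[ℝ] ℝ)} (hS : IsOrderDetermining S)
    {f : (V →ₗ[ℝ] ℝ) → ℝ} {b : V} (hb : ∀ s ∈ S, s b = f s) : representative S f = b := by
  have h : ∃ b : V, ∀ s ∈ S, s b = f s := ⟨b, hb⟩
  rw [representative, dif_pos h]
  exact hS.eq_of_forall_apply_eq fun s hs => (h.choose_spec s hs).trans (hb s hs).symm

lemma IsOrderDetermining.representative_sum {S : Set (V →ₗ[ℝ] ℝ)} (hS : IsOrderDetermining S)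
    {ι : Type*} (t : Finset ι) (c : ι → ℝ) {f : ι → (V →ₗ[ℝ] ℝ) → ℝ}
    (hf : ∀ i ∈ t, ∃ b : V, ∀ s ∈ S, s b = f i s) :
    representative S (fun s => ∑ i ∈ t, c i * f i s) = ∑ i ∈ t, c i • representative S (f i) := by
  refine hS.representative_eq fun s hs => ?_
  rw [map_sum]
  refine Finset.sum_congr rfl fun i hi => ?_
  obtain ⟨b, hb⟩ := hf i hi
  rw [map_smul, hS.representative_eq hb, hb s hs, smul_eq_mul]

lemma IsStateSpace.isOrderDetermining [IsOrderedAddMonoid V] {u : V} {S : Set (V →ₗ[ℝ] ℝ)}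
    (hS : IsStateSpace u S) : IsOrderDetermining S :=
  hS.2.2.2

lemma IsStateSpace.apply_mem_Icc [IsOrderedAddMonoid V] {u : V} {S : Set (V →ₗ[ℝ] ℝ)} (hS : IsStateSpace u S)
    {s : V →ₗ[ℝ] ℝ} (hs : s ∈ S) {a : V} (ha₀ : 0 ≤ a) (ha₁ : a ≤ u) : s a ∈ Set.Icc 0 1 := by
  obtain ⟨hpos, hnorm⟩ := hS.2.1 s hs
  have h := hpos _ (sub_nonneg.mpr ha₁)
  rw [map_sub, hnorm, sub_nonneg] at h
  exact ⟨hpos a ha₀, h⟩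

end StateSpace

section Operation

variable {V₁ V₂ : Type*} [AddCommGroup V₁] [PartialOrder V₁] [IsOrderedAddMonoid V₁] [Module ℝ V₁]
  [AddCommGroup V₂] [PartialOrder V₂] [IsOrderedAddMonoid V₂] [Module ℝ V₂]

lemma IsOperation.apply_mem_Icc {S₁ : Set (V₁ →ₗ[ℝ] ℝ)} {S₂ : Set (V₂ →ₗ[ℝ] ℝ)}
    {I : (V₁ →ₗ[ℝ] ℝ) → (V₂ →ₗ[ℝ] ℝ)} (hI : IsOperation S₁ S₂ I) {u₂ : V₂}
    (hS₂ : IsStateSpace u₂ S₂) {s : V₁ →ₗ[ℝ] ℝ} (hs : s ∈ S₁) {a : V₂} (ha₀ : 0 ≤ a)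
    (ha₁ : a ≤ u₂) : I s a ∈ Set.Icc 0 1 := by
  obtain ⟨lam, hlam₀, hlam₁, t, ht, hst⟩ := hI.1 s hs
  obtain ⟨hta₀, hta₁⟩ := hS₂.apply_mem_Icc ht ha₀ ha₁
  rw [hst, LinearMap.smul_apply, smul_eq_mul]
  exact ⟨mul_nonneg hlam₀ hta₀, mul_le_one₀ hlam₁ hta₀ hta₁⟩

lemma IsOperation.apply_convex_comb {S₁ : Set (V₁ →ₗ[ℝ] ℝ)} {S₂ : Set (V₂ →ₗ[ℝ] ℝ)}
    {I : (V₁ →ₗ[ℝ] ℝ) → (V₂ →ₗ[ℝ] ℝ)} (hI : IsOperation S₁ S₂ I) {s s' : V₁ →ₗ[ℝ] ℝ}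
    (hs : s ∈ S₁) (hs' : s' ∈ S₁) {t : ℝ} (ht₀ : 0 ≤ t) (ht₁ : t ≤ 1) (a : V₂) :
    I (t • s + (1 - t) • s') a = t * I s a + (1 - t) * I s' a := by
  rw [hI.2 s hs s' hs' t ht₀ ht₁]
  rfl

lemma IsOperation.exists_effect_apply_eq {S₁ : Set (V₁ →ₗ[ℝ] ℝ)} {S₂ : Set (V₂ →ₗ[ℝ] ℝ)}
    {I : (V₁ →ₗ[ℝ] ℝ) → (V₂ →ₗ[ℝ] ℝ)} (hI : IsOperation S₁ S₂ I) {u₁ : V₁} {u₂ : V₂}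
    (hS₂ : IsStateSpace u₂ S₂)
    (hunres : ∀ f : (V₁ →ₗ[ℝ] ℝ) → ℝ,
      (∀ s ∈ S₁, 0 ≤ f s ∧ f s ≤ 1) →
      (∀ s ∈ S₁, ∀ s' ∈ S₁, ∀ t : ℝ, 0 ≤ t → t ≤ 1 →
        f (t • s + (1 - t) • s') = t * f s + (1 - t) * f s') →
      ∃ a : V₁, 0 ≤ a ∧ a ≤ u₁ ∧ ∀ s ∈ S₁, f s = s a)
    {a : V₂} (ha₀ : 0 ≤ a) (ha₁ : a ≤ u₂) :
    ∃ b : V₁, 0 ≤ b ∧ b ≤ u₁ ∧ ∀ s ∈ S₁, s b = I s a := by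
  obtain ⟨b, hb₀, hb₁, hb⟩ := hunres (fun s => I s a)
    (fun s hs => hI.apply_mem_Icc hS₂ hs ha₀ ha₁)
    (fun s hs s' hs' t ht₀ ht₁ => hI.apply_convex_comb hs hs' ht₀ ht₁ a)
  exact ⟨b, hb₀, hb₁, fun s hs => (hb s hs).symm⟩

end Operation

section Dual

variable {V₁ V₂ : Type*} [AddCommGroup V₁] [PartialOrder V₁] [Module ℝ V₁]
  [AddCommGroup V₂] [Module ℝ V₂] {S₁ : Set (V₁ →ₗ[ℝ] ℝ)} {I : (V₁ →ₗ[ℝ] ℝ) → (V₂ →ₗ[ℝ] ℝ)}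

/-- The dual `𝓘*` of an operation `𝓘`. -/
noncomputable def operationDual (S₁ : Set (V₁ →ₗ[ℝ] ℝ)) (I : (V₁ →ₗ[ℝ] ℝ) → (V₂ →ₗ[ℝ] ℝ))
    (a : V₂) : V₁ :=
  representative S₁ fun s => I s a

lemma IsOrderDetermining.operationDual_eq (hS₁ : IsOrderDetermining S₁) {a : V₂} {b : V₁}
    (hb : ∀ s ∈ S₁, s b = I s a) : operationDual S₁ I a = b :=
  hS₁.representative_eq hb

lemma IsOrderDetermining.operationDual_sum (hS₁ : IsOrderDetermining S₁) {ι : Type*}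
    (t : Finset ι) (c : ι → ℝ) {a : ι → V₂} (ha : ∀ i ∈ t, ∃ b : V₁, ∀ s ∈ S₁, s b = I s (a i)) :
    operationDual S₁ I (∑ i ∈ t, c i • a i) = ∑ i ∈ t, c i • operationDual S₁ I (a i) := by
  simp only [operationDual]
  rw [← hS₁.representative_sum t c ha]
  congr 1
  ext s
  simp only [map_sum, map_smul, smul_eq_mul]

end Dual

theorem stmt_1_general
    {V₁ V₂ : Type*} [AddCommGroup V₁] [PartialOrder V₁] [IsOrderedAddMonoid V₁] [Module ℝ V₁]
    [AddCommGroup V₂] [PartialOrder V₂] [IsOrderedAddMonoid V₂] [Module ℝ V₂]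
    (u₁ : V₁)
    (u₂ : V₂)
    (S₁ : Set (V₁ →ₗ[ℝ] ℝ)) (S₂ : Set (V₂ →ₗ[ℝ] ℝ))
    (hS₁ : IsStateSpace u₁ S₁) (hS₂ : IsStateSpace u₂ S₂)
    (hunres : ∀ f : (V₁ →ₗ[ℝ] ℝ) → ℝ,
      (∀ s ∈ S₁, 0 ≤ f s ∧ f s ≤ 1) →
      (∀ s ∈ S₁, ∀ s' ∈ S₁, ∀ t : ℝ, 0 ≤ t → t ≤ 1 →
        f (t • s + (1 - t) • s') = t * f s + (1 - t) * f s') →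
      ∃ a : V₁, 0 ≤ a ∧ a ≤ u₁ ∧ ∀ s ∈ S₁, f s = s a)
    (I : (V₁ →ₗ[ℝ] ℝ) → (V₂ →ₗ[ℝ] ℝ)) (hI : IsOperation S₁ S₂ I) :
    ∃ D : V₂ → V₁,
      (∀ a : V₂, 0 ≤ a → a ≤ u₂ → 0 ≤ D a ∧ D a ≤ u₁) ∧
      (∀ s ∈ S₁, ∀ a : V₂, 0 ≤ a → a ≤ u₂ → s (D a) = I s a) ∧
      (∀ (n : ℕ) (a : Fin n → V₂) (lam : Fin n → ℝ),
        (∀ i, 0 ≤ a i ∧ a i ≤ u₂) → (∀ i, 0 ≤ lam i ∧ lam i ≤ 1) →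
        (∑ i, lam i) = 1 →
        D (∑ i, lam i • a i) = ∑ i, lam i • D (a i)) ∧
      (∀ D' : V₂ → V₁,
        (∀ a : V₂, 0 ≤ a → a ≤ u₂ → 0 ≤ D' a ∧ D' a ≤ u₁) →
        (∀ s ∈ S₁, ∀ a : V₂, 0 ≤ a → a ≤ u₂ → s (D' a) = I s a) →
        ∀ a : V₂, 0 ≤ a → a ≤ u₂ → D' a = D a) := by
  have hS₁od := hS₁.isOrderDetermining
  have hrep := fun a (ha₀ : 0 ≤ a) (ha₁ : a ≤ u₂) => hI.exists_effect_apply_eq hS₂ hunres ha₀ ha₁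
  refine ⟨operationDual S₁ I, fun a ha₀ ha₁ => ?_, fun s hs a ha₀ ha₁ => ?_,
    fun n a lam ha _ _ => ?_, fun D' _ hD' a ha₀ ha₁ => ?_⟩
  · obtain ⟨b, hb₀, hb₁, hb⟩ := hrep a ha₀ ha₁
    rw [hS₁od.operationDual_eq hb]
    exact ⟨hb₀, hb₁⟩
  · obtain ⟨b, -, -, hb⟩ := hrep a ha₀ ha₁
    rw [hS₁od.operationDual_eq hb, hb s hs]
  · refine hS₁od.operationDual_sum _ lam fun i _ => ?_
    obtain ⟨b, -, -, hb⟩ := hrep (a i) (ha i).1 (ha i).2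
    exact ⟨b, hb⟩
  · exact (hS₁od.operationDual_eq (hD' · · a ha₀ ha₁)).symm

theorem stmt_1
    {V₁ V₂ : Type*} [AddCommGroup V₁] [PartialOrder V₁] [IsOrderedAddMonoid V₁] [Module ℝ V₁]
    [AddCommGroup V₂] [PartialOrder V₂] [IsOrderedAddMonoid V₂] [Module ℝ V₂]
    (hsmul₁ : ∀ (c : ℝ) (x : V₁), 0 ≤ c → 0 ≤ x → 0 ≤ c • x)
    (hsmul₂ : ∀ (c : ℝ) (x : V₂), 0 ≤ c → 0 ≤ x → 0 ≤ c • x)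
    (u₁ : V₁) (hu₁0 : 0 ≤ u₁) (hu₁ne : u₁ ≠ 0)
    (u₂ : V₂) (hu₂0 : 0 ≤ u₂) (hu₂ne : u₂ ≠ 0)
    (S₁ : Set (V₁ →ₗ[ℝ] ℝ)) (S₂ : Set (V₂ →ₗ[ℝ] ℝ))
    (hS₁ : IsStateSpace u₁ S₁) (hS₂ : IsStateSpace u₂ S₂)
    (hunres : ∀ f : (V₁ →ₗ[ℝ] ℝ) → ℝ,
      (∀ s ∈ S₁, 0 ≤ f s ∧ f s ≤ 1) →
      (∀ s ∈ S₁, ∀ s' ∈ S₁, ∀ t : ℝ, 0 ≤ t → t ≤ 1 →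
        f (t • s + (1 - t) • s') = t * f s + (1 - t) * f s') →
      ∃ a : V₁, 0 ≤ a ∧ a ≤ u₁ ∧ ∀ s ∈ S₁, f s = s a)
    (I : (V₁ →ₗ[ℝ] ℝ) → (V₂ →ₗ[ℝ] ℝ)) (hI : IsOperation S₁ S₂ I) :
    ∃ D : V₂ → V₁,
      (∀ a : V₂, 0 ≤ a → a ≤ u₂ → 0 ≤ D a ∧ D a ≤ u₁) ∧
      (∀ s ∈ S₁, ∀ a : V₂, 0 ≤ a → a ≤ u₂ → s (D a) = I s a) ∧
      (∀ (n : ℕ) (a : Fin n → V₂) (lam : Fin n → ℝ),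
        (∀ i, 0 ≤ a i ∧ a i ≤ u₂) → (∀ i, 0 ≤ lam i ∧ lam i ≤ 1) →
        (∑ i, lam i) = 1 →
        D (∑ i, lam i • a i) = ∑ i, lam i • D (a i)) ∧
      (∀ D' : V₂ → V₁,
        (∀ a : V₂, 0 ≤ a → a ≤ u₂ → 0 ≤ D' a ∧ D' a ≤ u₁) →
        (∀ s ∈ S₁, ∀ a : V₂, 0 ≤ a → a ≤ u₂ → s (D' a) = I s a) →
        ∀ a : V₂, 0 ≤ a → a ≤ u₂ → D' a = D a) :=
  stmt_1_general u₁ u₂ S₁ S₂ hS₁ hS₂ hunres I hI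
end

section
/- Let 𝓘 = (𝓘ₓ)_{x∈Ω₁} and 𝓙 = (𝓙_y)_{y∈Ω₂} be instruments from E₁ to E₂ that coexist, i.e., there is a bi-instrument K = (K_{xy})_{(x,y)∈Ω₁×Ω₂} from E₁ to E₂ with ∑_{y∈Ω₂} K_{xy}(s) = 𝓘ₓ(s) and ∑_{x∈Ω₁} K_{xy}(s) = 𝓙_y(s) for all s ∈ S₁. Suppose 𝓘̂ₓ, 𝓙̂_y, K̂_{xy} ∈ E₁ are the measured effects, i.e., s(𝓘̂ₓ) = 𝓘ₓ(s)(u₂), s(𝓙̂_y) = 𝓙_y(s)(u₂) and s(K̂_{xy}) = K_{xy}(s)(u₂) for all s ∈ S₁ and all indices. Then (K̂_{xy}) is a bi-observable on E₁ with ∑_{y∈Ω₂} K̂_{xy} = 𝓘̂ₓ for all x ∈ Ω₁ and ∑_{x∈Ω₁} K̂_{xy} = 𝓙̂_y for all y ∈ Ω₂; in particular the measured observables 𝓘̂ and 𝓙̂ coexist. -/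
/-! An order-determining set of states separates points, so an effect is determined by the
probabilities that the states assign to it. Measured effects turn the marginal identities of
the bi-instrument and the normalisation of its total channel into identities between these
probabilities, evaluated at `u₂`. -/

section StateSpace

variable {V : Type*} [AddCommGroup V] [PartialOrder V] [IsOrderedAddMonoid V] [Module ℝ V]
  {u : V} {S : Set (V →ₗ[ℝ] ℝ)}

theorem IsStateSpace.map_unit (hS : IsStateSpace u S) {s : V →ₗ[ℝ] ℝ} (hs : s ∈ S) :
    s u = 1 :=
  (hS.2.1 s hs).2

theorem IsStateSpace.eq_of_forall_apply_eq (hS : IsStateSpace u S) {v w : V}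
    (h : ∀ s ∈ S, s v = s w) : v = w :=
  le_antisymm (hS.2.2.2 v w fun s hs => (h s hs).le) (hS.2.2.2 w v fun s hs => (h s hs).ge)

end StateSpace

theorem LinearMap.map_sum_eq_sum_apply {R V₁ V₂ ι : Type*} [CommSemiring R]
    [AddCommMonoid V₁] [Module R V₁] [AddCommMonoid V₂] [Module R V₂]
    (s : V₁ →ₗ[R] R) (a : ι → V₁) (F : ι → V₂ →ₗ[R] R) (v : V₂)
    (h : ∀ i, s (a i) = F i v) (t : Finset ι) :
    s (∑ i ∈ t, a i) = (∑ i ∈ t, F i) v := by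
  simp only [map_sum, LinearMap.sum_apply, h]

theorem stmt_3_general
    {V₁ V₂ : Type*} [AddCommGroup V₁] [PartialOrder V₁] [IsOrderedAddMonoid V₁] [Module ℝ V₁]
    [AddCommGroup V₂] [PartialOrder V₂] [IsOrderedAddMonoid V₂] [Module ℝ V₂]
    (u₁ : V₁)
    (u₂ : V₂)
    (S₁ : Set (V₁ →ₗ[ℝ] ℝ)) (S₂ : Set (V₂ →ₗ[ℝ] ℝ))
    (hS₁ : IsStateSpace u₁ S₁) (hS₂ : IsStateSpace u₂ S₂)
    {Ω₁ Ω₂ : Type*} [Fintype Ω₁] [Fintype Ω₂]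
    (I : Ω₁ → (V₁ →ₗ[ℝ] ℝ) → (V₂ →ₗ[ℝ] ℝ))
    (J : Ω₂ → (V₁ →ₗ[ℝ] ℝ) → (V₂ →ₗ[ℝ] ℝ))
    (K : Ω₁ → Ω₂ → (V₁ →ₗ[ℝ] ℝ) → (V₂ →ₗ[ℝ] ℝ))
    (hKch : ∀ s ∈ S₁, (∑ x, ∑ y, K x y s) ∈ S₂)
    (hmarg₁ : ∀ x, ∀ s ∈ S₁, (∑ y, K x y s) = I x s)
    (hmarg₂ : ∀ y, ∀ s ∈ S₁, (∑ x, K x y s) = J y s)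
    (Ihat : Ω₁ → V₁)
    (hIhat : ∀ x, ∀ s ∈ S₁, s (Ihat x) = I x s u₂)
    (Jhat : Ω₂ → V₁)
    (hJhat : ∀ y, ∀ s ∈ S₁, s (Jhat y) = J y s u₂)
    (Khat : Ω₁ → Ω₂ → V₁)
    (hKhat : ∀ x y, ∀ s ∈ S₁, s (Khat x y) = K x y s u₂) :
    (∑ x, ∑ y, Khat x y) = u₁ ∧
    (∀ x, (∑ y, Khat x y) = Ihat x) ∧
    (∀ y, (∑ x, Khat x y) = Jhat y) := by
  have hrow : ∀ x, ∀ s ∈ S₁, s (∑ y, Khat x y) = (∑ y, K x y s) u₂ := fun x s hs =>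
    s.map_sum_eq_sum_apply _ _ u₂ (fun y => hKhat x y s hs) _
  have hcol : ∀ y, ∀ s ∈ S₁, s (∑ x, Khat x y) = (∑ x, K x y s) u₂ := fun y s hs =>
    s.map_sum_eq_sum_apply _ _ u₂ (fun x => hKhat x y s hs) _
  refine ⟨hS₁.eq_of_forall_apply_eq fun s hs => ?_,
    fun x => hS₁.eq_of_forall_apply_eq fun s hs => ?_,
    fun y => hS₁.eq_of_forall_apply_eq fun s hs => ?_⟩
  · rw [s.map_sum_eq_sum_apply _ _ u₂ (fun x => hrow x s hs), hS₁.map_unit hs]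
    exact hS₂.map_unit (hKch s hs)
  · rw [hrow x s hs, hmarg₁ x s hs, hIhat x s hs]
  · rw [hcol y s hs, hmarg₂ y s hs, hJhat y s hs]

theorem stmt_3
    {V₁ V₂ : Type*} [AddCommGroup V₁] [PartialOrder V₁] [IsOrderedAddMonoid V₁] [Module ℝ V₁]
    [AddCommGroup V₂] [PartialOrder V₂] [IsOrderedAddMonoid V₂] [Module ℝ V₂]
    (hsmul₁ : ∀ (c : ℝ) (x : V₁), 0 ≤ c → 0 ≤ x → 0 ≤ c • x)
    (hsmul₂ : ∀ (c : ℝ) (x : V₂), 0 ≤ c → 0 ≤ x → 0 ≤ c • x)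
    (u₁ : V₁) (hu₁0 : 0 ≤ u₁) (hu₁ne : u₁ ≠ 0)
    (u₂ : V₂) (hu₂0 : 0 ≤ u₂) (hu₂ne : u₂ ≠ 0)
    (S₁ : Set (V₁ →ₗ[ℝ] ℝ)) (S₂ : Set (V₂ →ₗ[ℝ] ℝ))
    (hS₁ : IsStateSpace u₁ S₁) (hS₂ : IsStateSpace u₂ S₂)
    {Ω₁ Ω₂ : Type*} [Fintype Ω₁] [Nonempty Ω₁] [Fintype Ω₂] [Nonempty Ω₂]
    (I : Ω₁ → (V₁ →ₗ[ℝ] ℝ) → (V₂ →ₗ[ℝ] ℝ))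
    (J : Ω₂ → (V₁ →ₗ[ℝ] ℝ) → (V₂ →ₗ[ℝ] ℝ))
    (K : Ω₁ → Ω₂ → (V₁ →ₗ[ℝ] ℝ) → (V₂ →ₗ[ℝ] ℝ))
    (hIop : ∀ x, IsOperation S₁ S₂ (I x))
    (hIch : ∀ s ∈ S₁, (∑ x, I x s) ∈ S₂)
    (hJop : ∀ y, IsOperation S₁ S₂ (J y))
    (hJch : ∀ s ∈ S₁, (∑ y, J y s) ∈ S₂)
    (hKop : ∀ x y, IsOperation S₁ S₂ (K x y))
    (hKch : ∀ s ∈ S₁, (∑ x, ∑ y, K x y s) ∈ S₂)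
    (hmarg₁ : ∀ x, ∀ s ∈ S₁, (∑ y, K x y s) = I x s)
    (hmarg₂ : ∀ y, ∀ s ∈ S₁, (∑ x, K x y s) = J y s)
    (Ihat : Ω₁ → V₁) (hIhatE : ∀ x, 0 ≤ Ihat x ∧ Ihat x ≤ u₁)
    (hIhat : ∀ x, ∀ s ∈ S₁, s (Ihat x) = I x s u₂)
    (Jhat : Ω₂ → V₁) (hJhatE : ∀ y, 0 ≤ Jhat y ∧ Jhat y ≤ u₁)
    (hJhat : ∀ y, ∀ s ∈ S₁, s (Jhat y) = J y s u₂)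
    (Khat : Ω₁ → Ω₂ → V₁) (hKhatE : ∀ x y, 0 ≤ Khat x y ∧ Khat x y ≤ u₁)
    (hKhat : ∀ x y, ∀ s ∈ S₁, s (Khat x y) = K x y s u₂) :
    (∑ x, ∑ y, Khat x y) = u₁ ∧
    (∀ x, (∑ y, Khat x y) = Ihat x) ∧
    (∀ y, (∑ x, Khat x y) = Jhat y) :=
  stmt_3_general u₁ u₂ S₁ S₂ hS₁ hS₂ I J K hKch hmarg₁ hmarg₂ Ihat hIhat Jhat hJhat Khat hKhat
end

section
/- Let 𝓘 be an operation from E to E and let D : E → E satisfy s(D(b)) = 𝓘(s)(b) for all s ∈ S and b ∈ E, and set a = D(u) (the effect measured by 𝓘). Then the following are equivalent: (i) D(a) = a (a is 𝓘-repeatable); (ii) D(u − a) = 0; (iii) D(b) = 0 for every b ∈ E with a + b ≤ u; (iv) D(b) ≤ D(a) for every b ∈ E. -/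
open Set

namespace IsStateSpace

variable {V : Type*} [AddCommGroup V] [PartialOrder V] [IsOrderedAddMonoid V] [Module ℝ V]
  {u : V} {S : Set (V →ₗ[ℝ] ℝ)}

theorem ext (hS : IsStateSpace u S) {v w : V} (h : ∀ s ∈ S, s v = s w) : v = w :=
  le_antisymm (hS.2.2.2 v w fun s hs => (h s hs).le) (hS.2.2.2 w v fun s hs => (h s hs).ge)

theorem monotone_of_mem (hS : IsStateSpace u S) {s : V →ₗ[ℝ] ℝ} (hs : s ∈ S) : Monotone s := by
  intro v w hvw
  have h := (hS.2.1 s hs).1 (w - v) (sub_nonneg.2 hvw)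
  rwa [map_sub, sub_nonneg] at h

end IsStateSpace

theorem IsOperation.monotone_apply {V₁ V₂ : Type*} [AddCommGroup V₁] [PartialOrder V₁]
    [IsOrderedAddMonoid V₁] [Module ℝ V₁] [AddCommGroup V₂] [PartialOrder V₂]
    [IsOrderedAddMonoid V₂] [Module ℝ V₂] {u₂ : V₂} {S₁ : Set (V₁ →ₗ[ℝ] ℝ)}
    {S₂ : Set (V₂ →ₗ[ℝ] ℝ)} {I : (V₁ →ₗ[ℝ] ℝ) → (V₂ →ₗ[ℝ] ℝ)}
    (hS₂ : IsStateSpace u₂ S₂) (hI : IsOperation S₁ S₂ I) {s : V₁ →ₗ[ℝ] ℝ} (hs : s ∈ S₁) :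
    Monotone (I s) := by
  obtain ⟨lam, hlam, -, t, ht, hIs⟩ := hI.1 s hs
  intro v w hvw
  rw [hIs]
  exact mul_le_mul_of_nonneg_left (hS₂.monotone_of_mem ht hvw) hlam

def IsDualMap {V : Type*} [AddCommGroup V] [PartialOrder V] [Module ℝ V] (u : V)
    (S : Set (V →ₗ[ℝ] ℝ)) (I : (V →ₗ[ℝ] ℝ) → (V →ₗ[ℝ] ℝ)) (D : V → V) : Prop :=
  ∀ s ∈ S, ∀ b : V, 0 ≤ b → b ≤ u → s (D b) = I s b

namespace IsDualMap

variable {V : Type*} [AddCommGroup V] [PartialOrder V] [IsOrderedAddMonoid V] [Module ℝ V]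
  {u : V} {S : Set (V →ₗ[ℝ] ℝ)} {I : (V →ₗ[ℝ] ℝ) → (V →ₗ[ℝ] ℝ)} {D : V → V}

theorem monotoneOn (hD : IsDualMap u S I D) (hS : IsStateSpace u S) (hI : IsOperation S S I) :
    MonotoneOn D (Icc 0 u) := by
  rintro b ⟨hb0, hbu⟩ c ⟨hc0, hcu⟩ hbc
  refine hS.2.2.2 _ _ fun s hs => ?_
  rw [hD s hs b hb0 hbu, hD s hs c hc0 hcu]
  exact hI.monotone_apply hS hs hbc

theorem map_sub (hD : IsDualMap u S I D) (hS : IsStateSpace u S) {b c : V} (hb : b ∈ Icc 0 u)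
    (hc : c ∈ Icc 0 u) (hcb : c - b ∈ Icc 0 u) : D (c - b) = D c - D b :=
  hS.ext fun s hs => by
    rw [LinearMap.map_sub, hD s hs _ hcb.1 hcb.2, hD s hs _ hb.1 hb.2, hD s hs _ hc.1 hc.2,
      LinearMap.map_sub]

end IsDualMap

theorem stmt_4_general
    {V : Type*} [AddCommGroup V] [PartialOrder V] [IsOrderedAddMonoid V] [Module ℝ V]
    (u : V) (hu0 : 0 ≤ u)
    (S : Set (V →ₗ[ℝ] ℝ)) (hS : IsStateSpace u S)
    (I : (V →ₗ[ℝ] ℝ) → (V →ₗ[ℝ] ℝ)) (hI : IsOperation S S I)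
    (D : V → V) (hDE : ∀ b : V, 0 ≤ b → b ≤ u → 0 ≤ D b ∧ D b ≤ u)
    (hD : ∀ s ∈ S, ∀ b : V, 0 ≤ b → b ≤ u → s (D b) = I s b)
    (a : V) (ha : a = D u) :
    (D a = a ↔ D (u - a) = 0) ∧
    (D a = a ↔ ∀ b : V, 0 ≤ b → b ≤ u → a + b ≤ u → D b = 0) ∧
    (D a = a ↔ ∀ b : V, 0 ≤ b → b ≤ u → D b ≤ D a) := by
  have hDual : IsDualMap u S I D := hD
  have hmono := hDual.monotoneOn hS hI
  have hu : u ∈ Icc 0 u := ⟨hu0, le_rfl⟩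
  have haE : a ∈ Icc 0 u := ha ▸ hDE u hu0 le_rfl
  have huaE : u - a ∈ Icc 0 u := ⟨sub_nonneg.2 haE.2, sub_le_self u haE.1⟩
  have hcompl : D (u - a) = a - D a := by rw [hDual.map_sub hS haE hu huaE, ← ha]
  have hcompl_iff : D a = a ↔ D (u - a) = 0 := by rw [hcompl, sub_eq_zero, eq_comm]
  refine ⟨hcompl_iff, ⟨fun h b hb0 hbu hab => ?_, fun h => hcompl_iff.2 (h _ huaE.1 huaE.2 ?_)⟩,
    fun h b hb0 hbu => ?_, fun h => ?_⟩
  · have hbua : b ≤ u - a := le_sub_iff_add_le'.2 hab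
    exact le_antisymm (hcompl_iff.1 h ▸ hmono ⟨hb0, hbu⟩ huaE hbua) (hDE b hb0 hbu).1
  · rw [add_sub_cancel]
  · exact (hmono ⟨hb0, hbu⟩ hu hbu).trans (ha.symm.trans h.symm).le
  · exact le_antisymm ((hmono haE hu haE.2).trans ha.ge) (ha.le.trans (h u hu0 le_rfl))

theorem stmt_4
    {V : Type*} [AddCommGroup V] [PartialOrder V] [IsOrderedAddMonoid V] [Module ℝ V]
    (hsmul : ∀ (c : ℝ) (x : V), 0 ≤ c → 0 ≤ x → 0 ≤ c • x)
    (u : V) (hu0 : 0 ≤ u) (hune : u ≠ 0)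
    (S : Set (V →ₗ[ℝ] ℝ)) (hS : IsStateSpace u S)
    (I : (V →ₗ[ℝ] ℝ) → (V →ₗ[ℝ] ℝ)) (hI : IsOperation S S I)
    (D : V → V) (hDE : ∀ b : V, 0 ≤ b → b ≤ u → 0 ≤ D b ∧ D b ≤ u)
    (hD : ∀ s ∈ S, ∀ b : V, 0 ≤ b → b ≤ u → s (D b) = I s b)
    (a : V) (ha : a = D u) :
    (D a = a ↔ D (u - a) = 0) ∧
    (D a = a ↔ ∀ b : V, 0 ≤ b → b ≤ u → a + b ≤ u → D b = 0) ∧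
    (D a = a ↔ ∀ b : V, 0 ≤ b → b ≤ u → D b ≤ D a) :=
  stmt_4_general u hu0 S hS I hI D hDE hD a ha
end

section
/- An effect a ∈ E is repeatable — meaning there exist an operation 𝓘 from E to E and a map D : E → E with s(D(b)) = 𝓘(s)(b) for all s ∈ S and b ∈ E, such that D(u) = a and D(a) = a — if and only if a = 0 or there exists s₁ ∈ S with s₁(a) = 1. -/
section Repeatable

variable {V : Type*} [AddCommGroup V] [PartialOrder V] [IsOrderedAddMonoid V] [Module ℝ V]
  {u a b : V} {S : Set (V →ₗ[ℝ] ℝ)} {s : V →ₗ[ℝ] ℝ}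

/-- `D` is the dual of the operation `I` on the effect algebra `[0, u]`. -/
def IsRepeatable (u : V) (S : Set (V →ₗ[ℝ] ℝ)) (a : V) : Prop :=
  ∃ (I : (V →ₗ[ℝ] ℝ) → (V →ₗ[ℝ] ℝ)) (D : V → V),
    IsOperation S S I ∧
    (∀ b : V, 0 ≤ b → b ≤ u → 0 ≤ D b ∧ D b ≤ u) ∧
    (∀ s ∈ S, ∀ b : V, 0 ≤ b → b ≤ u → s (D b) = I s b) ∧
    D u = a ∧ D a = a

namespace IsStateSpace

theorem apply_nonneg (hS : IsStateSpace u S) (hs : s ∈ S) (hb : 0 ≤ b) : 0 ≤ s b :=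
  (hS.2.1 s hs).1 b hb

theorem apply_unit_eq_one (hS : IsStateSpace u S) (hs : s ∈ S) : s u = 1 :=
  (hS.2.1 s hs).2

theorem le_of_forall_apply_le {v w : V} (hS : IsStateSpace u S) (h : ∀ s ∈ S, s v ≤ s w) :
    v ≤ w :=
  hS.2.2.2 v w h

theorem apply_le_one (hS : IsStateSpace u S) (hs : s ∈ S) (hbu : b ≤ u) : s b ≤ 1 := by
  have h := hS.apply_nonneg hs (sub_nonneg.mpr hbu)
  rw [map_sub, hS.apply_unit_eq_one hs] at h
  linarith

theorem eq_zero_of_forall_apply_eq_zero (hS : IsStateSpace u S) (h : ∀ s ∈ S, s a = 0) : a = 0 :=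
  le_antisymm (hS.le_of_forall_apply_le fun s hs => by simp [h s hs])
    (hS.le_of_forall_apply_le fun s hs => by simp [h s hs])

end IsStateSpace

theorem IsRepeatable.exists_apply_eq_one (hS : IsStateSpace u S) (hu0 : 0 ≤ u)
    (ha : 0 ≤ a ∧ a ≤ u) (h : IsRepeatable u S a) (ha0 : a ≠ 0) : ∃ t ∈ S, t a = 1 := by
  obtain ⟨I, D, ⟨hsub, -⟩, -, hdual, hDu, hDa⟩ := h
  obtain ⟨s, hs, hsa⟩ : ∃ s ∈ S, s a ≠ 0 := by
    by_contra! h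
    exact ha0 (hS.eq_zero_of_forall_apply_eq_zero h)
  obtain ⟨lam, -, -, t, ht, hIs⟩ := hsub s hs
  have hsa_lam : s a = lam := by
    simpa [hDu, hIs, hS.apply_unit_eq_one ht] using hdual s hs u hu0 le_rfl
  have hsa_lam_ta : s a = lam * t a := by
    simpa [hDa, hIs] using hdual s hs a ha.1 ha.2
  refine ⟨t, ht, mul_left_cancel₀ (hsa_lam ▸ hsa) ?_⟩
  rw [mul_one, ← hsa_lam_ta, hsa_lam]

theorem isRepeatable_zero (hne : S.Nonempty) (hu0 : 0 ≤ u) : IsRepeatable u S 0 := by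
  obtain ⟨t, ht⟩ := hne
  exact ⟨fun _ => 0, fun _ => 0,
    ⟨fun _ _ => ⟨0, le_rfl, zero_le_one, t, ht, by simp⟩, fun _ _ _ _ _ _ _ => by simp⟩,
    fun _ _ _ => ⟨le_rfl, hu0⟩, fun _ _ _ _ _ => by simp, rfl, rfl⟩

theorem isOperation_apply_smul (hS : IsStateSpace u S) (ha : 0 ≤ a ∧ a ≤ u) {s₁ : V →ₗ[ℝ] ℝ}
    (hs₁ : s₁ ∈ S) : IsOperation S S (fun s => s a • s₁) := by
  refine ⟨fun s hs => ⟨s a, hS.apply_nonneg hs ha.1, hS.apply_le_one hs ha.2, s₁, hs₁, rfl⟩, ?_⟩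
  intro s _ s' _ t _ _
  simp only [LinearMap.add_apply, LinearMap.smul_apply, smul_eq_mul, add_smul, smul_smul]

theorem isRepeatable_of_apply_eq_one [IsOrderedModule ℝ V] (hS : IsStateSpace u S)
    (ha : 0 ≤ a ∧ a ≤ u) {s₁ : V →ₗ[ℝ] ℝ} (hs₁ : s₁ ∈ S) (h : s₁ a = 1) :
    IsRepeatable u S a := by
  refine ⟨fun s => s a • s₁, fun b => s₁ b • a, isOperation_apply_smul hS ha hs₁, ?_, ?_, ?_, ?_⟩
  · intro b hb hbu
    exact ⟨smul_nonneg (hS.apply_nonneg hs₁ hb) ha.1,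
      (smul_le_of_le_one_left ha.1 (hS.apply_le_one hs₁ hbu)).trans ha.2⟩
  · intro s _ b _ _
    simp [mul_comm]
  · simp [hS.apply_unit_eq_one hs₁]
  · simp [h]

end Repeatable

theorem stmt_6_general
    {V : Type*} [AddCommGroup V] [PartialOrder V] [IsOrderedAddMonoid V] [Module ℝ V]
    (hsmul : ∀ (c : ℝ) (x : V), 0 ≤ c → 0 ≤ x → 0 ≤ c • x)
    (u : V) (hu0 : 0 ≤ u)
    (S : Set (V →ₗ[ℝ] ℝ)) (hS : IsStateSpace u S)
    (a : V) (haE : 0 ≤ a ∧ a ≤ u) :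
    (∃ (I : (V →ₗ[ℝ] ℝ) → (V →ₗ[ℝ] ℝ)) (D : V → V),
      IsOperation S S I ∧
      (∀ b : V, 0 ≤ b → b ≤ u → 0 ≤ D b ∧ D b ≤ u) ∧
      (∀ s ∈ S, ∀ b : V, 0 ≤ b → b ≤ u → s (D b) = I s b) ∧
      D u = a ∧ D a = a) ↔
    (a = 0 ∨ ∃ s₁ ∈ S, s₁ a = 1) := by
  have : IsOrderedModule ℝ V := .of_smul_nonneg fun c hc x hx => hsmul c x hc hx
  change IsRepeatable u S a ↔ _
  constructor
  · intro h
    by_cases ha0 : a = 0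
    · exact Or.inl ha0
    · exact Or.inr (h.exists_apply_eq_one hS hu0 haE ha0)
  · rintro (rfl | ⟨s₁, hs₁, h⟩)
    · exact isRepeatable_zero hS.1 hu0
    · exact isRepeatable_of_apply_eq_one hS haE hs₁ h

theorem stmt_6
    {V : Type*} [AddCommGroup V] [PartialOrder V] [IsOrderedAddMonoid V] [Module ℝ V]
    (hsmul : ∀ (c : ℝ) (x : V), 0 ≤ c → 0 ≤ x → 0 ≤ c • x)
    (u : V) (hu0 : 0 ≤ u) (hune : u ≠ 0)
    (S : Set (V →ₗ[ℝ] ℝ)) (hS : IsStateSpace u S)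
    (a : V) (haE : 0 ≤ a ∧ a ≤ u) :
    (∃ (I : (V →ₗ[ℝ] ℝ) → (V →ₗ[ℝ] ℝ)) (D : V → V),
      IsOperation S S I ∧
      (∀ b : V, 0 ≤ b → b ≤ u → 0 ≤ D b ∧ D b ≤ u) ∧
      (∀ s ∈ S, ∀ b : V, 0 ≤ b → b ≤ u → s (D b) = I s b) ∧
      D u = a ∧ D a = a) ↔
    (a = 0 ∨ ∃ s₁ ∈ S, s₁ a = 1) :=
  stmt_6_general hsmul u hu0 S hS a haE
end

section
/- Let a ∈ E, let β₁, β₂ ∈ S satisfy β₁(a) = 1 and β₂(u − a) = 1, and let λ ∈ (0,1). Then the mixed Holevo operation α ↦ λ·α(a) • β₁ + (1−λ)·α(u−a) • β₂ is not pure: there do not exist b ∈ E and β ∈ S such that λ·α(a) • β₁ + (1−λ)·α(u−a) • β₂ = α(b) • β (as functionals on V) for all α ∈ S. -/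
theorem LinearMap.eq_of_smul_eq_smul_of_apply_eq_one {𝕜 M : Type*} [Field 𝕜] [AddCommGroup M]
    [Module 𝕜 M] {s β : M →ₗ[𝕜] 𝕜} {u : M} (hs : s u = 1) (hβ : β u = 1) {c t : 𝕜}
    (hc : c ≠ 0) (h : c • s = t • β) : s = β := by
  have hct : c = t := by simpa [hs, hβ] using LinearMap.congr_fun h u
  rw [hct] at h hc
  exact smul_right_injective _ hc h

theorem stmt_7_general
    {V : Type*} [AddCommGroup V] [PartialOrder V] [IsOrderedAddMonoid V] [Module ℝ V]
    (u : V)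
    (S : Set (V →ₗ[ℝ] ℝ)) (hS : IsStateSpace u S)
    (a : V)
    (β₁ β₂ : V →ₗ[ℝ] ℝ) (hβ₁ : β₁ ∈ S) (hβ₂ : β₂ ∈ S)
    (hβ₁a : β₁ a = 1) (hβ₂a' : β₂ (u - a) = 1)
    (lam : ℝ) (hlam0 : 0 < lam) (hlam1 : lam < 1) :
    ¬ ∃ (b : V) (β : V →ₗ[ℝ] ℝ), 0 ≤ b ∧ b ≤ u ∧ β ∈ S ∧
      ∀ α ∈ S, (lam * α a) • β₁ + ((1 - lam) * α (u - a)) • β₂ = α b • β := by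
  rintro ⟨b, β, -, -, hβ, h⟩
  have hu : ∀ s ∈ S, s u = 1 := fun s hs => (hS.2.1 s hs).2
  have hβ₁a' : β₁ (u - a) = 0 := by rw [map_sub, hu β₁ hβ₁, hβ₁a, sub_self]
  have hβ₂a : β₂ a = 0 := by rw [map_sub, hu β₂ hβ₂] at hβ₂a'; linarith
  have h₁ : β₁ = β :=
    LinearMap.eq_of_smul_eq_smul_of_apply_eq_one (hu β₁ hβ₁) (hu β hβ) hlam0.ne'
      (by simpa [hβ₁a, hβ₁a'] using h β₁ hβ₁)
  have h₂ : β₂ = β :=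
    LinearMap.eq_of_smul_eq_smul_of_apply_eq_one (hu β₂ hβ₂) (hu β hβ) (sub_ne_zero.2 hlam1.ne')
      (by simpa [hβ₂a, hβ₂a'] using h β₂ hβ₂)
  rw [h₂, ← h₁, hβ₁a] at hβ₂a
  exact one_ne_zero hβ₂a

theorem stmt_7
    {V : Type*} [AddCommGroup V] [PartialOrder V] [IsOrderedAddMonoid V] [Module ℝ V]
    (hsmul : ∀ (c : ℝ) (x : V), 0 ≤ c → 0 ≤ x → 0 ≤ c • x)
    (u : V) (hu0 : 0 ≤ u) (hune : u ≠ 0)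
    (S : Set (V →ₗ[ℝ] ℝ)) (hS : IsStateSpace u S)
    (a : V) (haE : 0 ≤ a ∧ a ≤ u)
    (β₁ β₂ : V →ₗ[ℝ] ℝ) (hβ₁ : β₁ ∈ S) (hβ₂ : β₂ ∈ S)
    (hβ₁a : β₁ a = 1) (hβ₂a' : β₂ (u - a) = 1)
    (lam : ℝ) (hlam0 : 0 < lam) (hlam1 : lam < 1) :
    ¬ ∃ (b : V) (β : V →ₗ[ℝ] ℝ), 0 ≤ b ∧ b ≤ u ∧ β ∈ S ∧
      ∀ α ∈ S, (lam * α a) • β₁ + ((1 - lam) * α (u - a)) • β₂ = α b • β :=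
  stmt_7_general u S hS a β₁ β₂ hβ₁ hβ₂ hβ₁a hβ₂a' lam hlam0 hlam1
end

section
/- Let A = (Aₓ)_{x∈Ω_A} be an observable on E₁ with states αₓ ∈ S₂, B = (B_y)_{y∈Ω_B} an observable on E₂ with states β_y ∈ S₃, and let 𝓘ₓ(γ) = γ(Aₓ) • αₓ and Ĵ_y(φ) = φ(B_y) • β_y as for the pure Holevo instruments. Then: (1) for each x ∈ Ω_A the functional δₓ := ∑_{y∈Ω_B} αₓ(B_y) • β_y belongs to S₃ and the first marginal satisfies ∑_{y∈Ω_B} Ĵ_y(𝓘ₓ(γ)) = γ(Aₓ) • δₓ for all γ ∈ S₁ (i.e. it is the pure Holevo instrument H^(A,δ)); (2) for each y ∈ Ω_B the element C_y := ∑_{x∈Ω_A} αₓ(B_y) • Aₓ lies in E₁, the family (C_y) is an observable on E₁, and the second marginal satisfies ∑_{x∈Ω_A} Ĵ_y(𝓘ₓ(γ)) = γ(C_y) • β_y for all γ ∈ S₁ (i.e. it is the pure Holevo instrument H^(C,β)). -/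
open Finset

namespace IsStateSpace

variable {V : Type*} [AddCommGroup V] [PartialOrder V] [IsOrderedAddMonoid V] [Module ℝ V]
  {u : V} {S : Set (V →ₗ[ℝ] ℝ)} {s : V →ₗ[ℝ] ℝ}

theorem convex (hS : IsStateSpace u S) : Convex ℝ S := by
  intro s hs s' hs' a b ha hb hab
  obtain rfl : b = 1 - a := by linarith
  exact hS.2.2.1 s hs s' hs' a ha (by linarith)

theorem map_nonneg (hS : IsStateSpace u S) (hs : s ∈ S) {v : V} (hv : 0 ≤ v) : 0 ≤ s v :=
  (hS.2.1 s hs).1 v hv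

theorem sum_map_eq_one (hS : IsStateSpace u S) (hs : s ∈ S) {Ω : Type*} [Fintype Ω]
    {B : Ω → V} (hB : ∑ y, B y = u) : ∑ y, s (B y) = 1 := by
  rw [← map_sum, hB, (hS.2.1 s hs).2]

end IsStateSpace

theorem sum_sum_smul_eq_sum_of_sum_eq_one {M : Type*} [AddCommMonoid M] [Module ℝ M]
    {ΩA ΩB : Type*} [Fintype ΩA] [Fintype ΩB] {p : ΩA → ΩB → ℝ} (hp : ∀ x, ∑ y, p x y = 1)
    (A : ΩA → M) : ∑ y, ∑ x, p x y • A x = ∑ x, A x := by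
  rw [sum_comm]
  simp only [← sum_smul, hp, one_smul]

section Holevo

variable {V W M : Type*} [AddCommGroup V] [Module ℝ V] [AddCommGroup W] [Module ℝ W]
  [AddCommGroup M] [Module ℝ M] {ΩA ΩB : Type*}

/-- The operation `𝓘ₓ` of the pure Holevo instrument `H^(A,α)`. -/
def holevoOp (A : ΩA → V) (α : ΩA → W) (x : ΩA) (γ : V →ₗ[ℝ] ℝ) : W :=
  γ (A x) • α x

variable (A : ΩA → V) (α : ΩA → W →ₗ[ℝ] ℝ) (B : ΩB → W) (β : ΩB → M)

theorem sum_holevoOp_comp_holevoOp_left [Fintype ΩB] (x : ΩA) (γ : V →ₗ[ℝ] ℝ) :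
    ∑ y, holevoOp B β y (holevoOp A α x γ) = holevoOp A (fun x ↦ ∑ y, α x (B y) • β y) x γ := by
  simp only [holevoOp, smul_sum, LinearMap.smul_apply, smul_eq_mul, mul_smul]

theorem sum_holevoOp_comp_holevoOp_right [Fintype ΩA] (y : ΩB) (γ : V →ₗ[ℝ] ℝ) :
    ∑ x, holevoOp B β y (holevoOp A α x γ) = holevoOp (fun y ↦ ∑ x, α x (B y) • A x) β y γ := by
  simp only [holevoOp, map_sum, map_smul, LinearMap.smul_apply, smul_eq_mul, sum_smul, mul_comm]

end Holevo

theorem stmt_17_general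
    {V₁ V₂ V₃ : Type*} [AddCommGroup V₁] [PartialOrder V₁] [IsOrderedAddMonoid V₁] [Module ℝ V₁]
    [AddCommGroup V₂] [PartialOrder V₂] [IsOrderedAddMonoid V₂] [Module ℝ V₂]
    [AddCommGroup V₃] [PartialOrder V₃] [IsOrderedAddMonoid V₃] [Module ℝ V₃]
    (hsmul₁ : ∀ (c : ℝ) (x : V₁), 0 ≤ c → 0 ≤ x → 0 ≤ c • x)
    (u₁ : V₁) (u₂ : V₂) (u₃ : V₃)
    (S₁ : Set (V₁ →ₗ[ℝ] ℝ)) (S₂ : Set (V₂ →ₗ[ℝ] ℝ)) (S₃ : Set (V₃ →ₗ[ℝ] ℝ))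
    (hS₂ : IsStateSpace u₂ S₂) (hS₃ : IsStateSpace u₃ S₃)
    {ΩA ΩB : Type*} [Fintype ΩA] [Fintype ΩB]
    (A : ΩA → V₁) (hAE : ∀ x, 0 ≤ A x ∧ A x ≤ u₁) (hAobs : (∑ x, A x) = u₁)
    (α : ΩA → (V₂ →ₗ[ℝ] ℝ)) (hα : ∀ x, α x ∈ S₂)
    (B : ΩB → V₂) (hBE : ∀ y, 0 ≤ B y ∧ B y ≤ u₂) (hBobs : (∑ y, B y) = u₂)
    (β : ΩB → (V₃ →ₗ[ℝ] ℝ)) (hβ : ∀ y, β y ∈ S₃)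
    (I : ΩA → (V₁ →ₗ[ℝ] ℝ) → (V₂ →ₗ[ℝ] ℝ))
    (hIdef : ∀ x γ, I x γ = γ (A x) • α x)
    (J : ΩB → (V₂ →ₗ[ℝ] ℝ) → (V₃ →ₗ[ℝ] ℝ))
    (hJdef : ∀ y φ, J y φ = φ (B y) • β y) :
    (∀ x, (∑ y, α x (B y) • β y) ∈ S₃) ∧
    (∀ γ ∈ S₁, ∀ x, (∑ y, J y (I x γ)) = γ (A x) • (∑ y, α x (B y) • β y)) ∧
    (∀ y, 0 ≤ (∑ x, α x (B y) • A x) ∧ (∑ x, α x (B y) • A x) ≤ u₁) ∧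
    (∑ y, ∑ x, α x (B y) • A x) = u₁ ∧
    (∀ γ ∈ S₁, ∀ y, (∑ x, J y (I x γ)) = γ (∑ x, α x (B y) • A x) • β y) := by
  obtain rfl : I = holevoOp A α := funext₂ hIdef
  obtain rfl : J = holevoOp B β := funext₂ hJdef
  have hαB_nonneg : ∀ x y, 0 ≤ α x (B y) := fun x y ↦ hS₂.map_nonneg (hα x) (hBE y).1
  have hαB_sum : ∀ x, ∑ y, α x (B y) = 1 := fun x ↦ hS₂.sum_map_eq_one (hα x) hBobs
  have hC_nonneg : ∀ y, 0 ≤ ∑ x, α x (B y) • A x := fun y ↦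
    sum_nonneg fun x _ ↦ hsmul₁ _ _ (hαB_nonneg x y) (hAE x).1
  have hC_obs : ∑ y, ∑ x, α x (B y) • A x = u₁ := by
    rw [sum_sum_smul_eq_sum_of_sum_eq_one hαB_sum, hAobs]
  refine ⟨fun x ↦ hS₃.convex.sum_mem (fun y _ ↦ hαB_nonneg x y) (hαB_sum x) (fun y _ ↦ hβ y),
    fun γ _ x ↦ sum_holevoOp_comp_holevoOp_left A α B β x γ,
    fun y ↦ ⟨hC_nonneg y, hC_obs ▸ single_le_sum (fun y _ ↦ hC_nonneg y) (mem_univ y)⟩,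
    hC_obs, fun γ _ y ↦ sum_holevoOp_comp_holevoOp_right A α B β y γ⟩

theorem stmt_17
    {V₁ V₂ V₃ : Type*} [AddCommGroup V₁] [PartialOrder V₁] [IsOrderedAddMonoid V₁] [Module ℝ V₁]
    [AddCommGroup V₂] [PartialOrder V₂] [IsOrderedAddMonoid V₂] [Module ℝ V₂]
    [AddCommGroup V₃] [PartialOrder V₃] [IsOrderedAddMonoid V₃] [Module ℝ V₃]
    (hsmul₁ : ∀ (c : ℝ) (x : V₁), 0 ≤ c → 0 ≤ x → 0 ≤ c • x)
    (hsmul₂ : ∀ (c : ℝ) (x : V₂), 0 ≤ c → 0 ≤ x → 0 ≤ c • x)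
    (hsmul₃ : ∀ (c : ℝ) (x : V₃), 0 ≤ c → 0 ≤ x → 0 ≤ c • x)
    (u₁ : V₁) (hu₁0 : 0 ≤ u₁) (hu₁ne : u₁ ≠ 0)
    (u₂ : V₂) (hu₂0 : 0 ≤ u₂) (hu₂ne : u₂ ≠ 0)
    (u₃ : V₃) (hu₃0 : 0 ≤ u₃) (hu₃ne : u₃ ≠ 0)
    (S₁ : Set (V₁ →ₗ[ℝ] ℝ)) (S₂ : Set (V₂ →ₗ[ℝ] ℝ)) (S₃ : Set (V₃ →ₗ[ℝ] ℝ))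
    (hS₁ : IsStateSpace u₁ S₁) (hS₂ : IsStateSpace u₂ S₂) (hS₃ : IsStateSpace u₃ S₃)
    {ΩA ΩB : Type*} [Fintype ΩA] [Nonempty ΩA] [Fintype ΩB] [Nonempty ΩB]
    (A : ΩA → V₁) (hAE : ∀ x, 0 ≤ A x ∧ A x ≤ u₁) (hAobs : (∑ x, A x) = u₁)
    (α : ΩA → (V₂ →ₗ[ℝ] ℝ)) (hα : ∀ x, α x ∈ S₂)
    (B : ΩB → V₂) (hBE : ∀ y, 0 ≤ B y ∧ B y ≤ u₂) (hBobs : (∑ y, B y) = u₂)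
    (β : ΩB → (V₃ →ₗ[ℝ] ℝ)) (hβ : ∀ y, β y ∈ S₃)
    (I : ΩA → (V₁ →ₗ[ℝ] ℝ) → (V₂ →ₗ[ℝ] ℝ))
    (hIdef : ∀ x γ, I x γ = γ (A x) • α x)
    (J : ΩB → (V₂ →ₗ[ℝ] ℝ) → (V₃ →ₗ[ℝ] ℝ))
    (hJdef : ∀ y φ, J y φ = φ (B y) • β y) :
    (∀ x, (∑ y, α x (B y) • β y) ∈ S₃) ∧
    (∀ γ ∈ S₁, ∀ x, (∑ y, J y (I x γ)) = γ (A x) • (∑ y, α x (B y) • β y)) ∧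
    (∀ y, 0 ≤ (∑ x, α x (B y) • A x) ∧ (∑ x, α x (B y) • A x) ≤ u₁) ∧
    (∑ y, ∑ x, α x (B y) • A x) = u₁ ∧
    (∀ γ ∈ S₁, ∀ y, (∑ x, J y (I x γ)) = γ (∑ x, α x (B y) • A x) • β y) :=
  stmt_17_general hsmul₁ u₁ u₂ u₃ S₁ S₂ S₃ hS₂ hS₃ A hAE hAobs α hα B hBE hBobs β hβ I hIdef J hJdef
end

section
/- Let A = (Aₓ)_{x∈Ω_A} and B = (B_y)_{y∈Ω_B} be observables on E and let βₓ ∈ S for each x ∈ Ω_A. Then the Holevo sequential product (A∘B)_{xy} := βₓ(B_y) • Aₓ is a bi-observable on E: each (A∘B)_{xy} ∈ E and ∑_{x,y} (A∘B)_{xy} = u; its first marginal is A, i.e. ∑_{y∈Ω_B} βₓ(B_y) • Aₓ = Aₓ for each x; and its second marginal (y ↦ ∑_{x∈Ω_A} βₓ(B_y) • Aₓ) is an observable on E. Hence A coexists with the observable y ↦ ∑ₓ βₓ(B_y) • Aₓ, with joint bi-observable A∘B. -/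
section StateSpace

variable {V : Type*} [AddCommGroup V] [PartialOrder V] [IsOrderedAddMonoid V] [Module ℝ V]
  {u : V} {S : Set (V →ₗ[ℝ] ℝ)} {s : V →ₗ[ℝ] ℝ}

theorem IsStateSpace.apply_nonneg_s18 (hS : IsStateSpace u S) (hs : s ∈ S) {x : V} (hx : 0 ≤ x) :
    0 ≤ s x :=
  (hS.2.1 s hs).1 x hx

theorem IsStateSpace.apply_unit (hS : IsStateSpace u S) (hs : s ∈ S) : s u = 1 :=
  (hS.2.1 s hs).2

theorem IsStateSpace.apply_le_one_s18 (hS : IsStateSpace u S) (hs : s ∈ S) {x : V} (hx : x ≤ u) :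
    s x ≤ 1 := by
  have h := hS.apply_nonneg_s18 hs (sub_nonneg.mpr hx)
  rw [map_sub, hS.apply_unit hs] at h
  linarith

theorem IsStateSpace.sum_apply_eq_one {ι : Type*} [Fintype ι] (hS : IsStateSpace u S)
    (hs : s ∈ S) {B : ι → V} (hB : ∑ i, B i = u) : ∑ i, s (B i) = 1 := by
  rw [← map_sum, hB, hS.apply_unit hs]

end StateSpace

theorem smul_le_self_of_le_one {V : Type*} [AddCommGroup V] [PartialOrder V]
    [IsOrderedAddMonoid V] [Module ℝ V]
    (hsmul : ∀ (c : ℝ) (x : V), 0 ≤ c → 0 ≤ x → 0 ≤ c • x)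
    {c : ℝ} (hc : c ≤ 1) {a : V} (ha : 0 ≤ a) : c • a ≤ a := by
  have h := hsmul (1 - c) a (sub_nonneg.mpr hc) ha
  rwa [sub_smul, one_smul, sub_nonneg] at h

theorem stmt_18_general
    {V : Type*} [AddCommGroup V] [PartialOrder V] [IsOrderedAddMonoid V] [Module ℝ V]
    (hsmul : ∀ (c : ℝ) (x : V), 0 ≤ c → 0 ≤ x → 0 ≤ c • x)
    (u : V)
    (S : Set (V →ₗ[ℝ] ℝ)) (hS : IsStateSpace u S)
    {ΩA ΩB : Type*} [Fintype ΩA] [Fintype ΩB]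
    (A : ΩA → V) (hAE : ∀ x, 0 ≤ A x ∧ A x ≤ u) (hAobs : (∑ x, A x) = u)
    (B : ΩB → V) (hBE : ∀ y, 0 ≤ B y ∧ B y ≤ u) (hBobs : (∑ y, B y) = u)
    (β : ΩA → (V →ₗ[ℝ] ℝ)) (hβ : ∀ x, β x ∈ S) :
    (∀ (x : ΩA) (y : ΩB), 0 ≤ β x (B y) • A x ∧ β x (B y) • A x ≤ u) ∧
    (∑ x, ∑ y, β x (B y) • A x) = u ∧
    (∀ x, (∑ y, β x (B y) • A x) = A x) ∧
    (∀ y, 0 ≤ (∑ x, β x (B y) • A x) ∧ (∑ x, β x (B y) • A x) ≤ u) ∧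
    (∑ y, ∑ x, β x (B y) • A x) = u := by
  have hnonneg x y : 0 ≤ β x (B y) • A x :=
    hsmul _ _ (hS.apply_nonneg_s18 (hβ x) (hBE y).1) (hAE x).1
  have hle x y : β x (B y) • A x ≤ A x :=
    smul_le_self_of_le_one hsmul (hS.apply_le_one_s18 (hβ x) (hBE y).2) (hAE x).1
  have hmarg x : ∑ y, β x (B y) • A x = A x := by
    rw [← Finset.sum_smul, hS.sum_apply_eq_one (hβ x) hBobs, one_smul]
  have htotal : ∑ x, ∑ y, β x (B y) • A x = u := by
    simp only [hmarg, hAobs]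
  refine ⟨fun x y => ⟨hnonneg x y, (hle x y).trans (hAE x).2⟩, htotal, hmarg,
    fun y => ⟨Finset.sum_nonneg fun x _ => hnonneg x y, ?_⟩, by rwa [Finset.sum_comm]⟩
  calc ∑ x, β x (B y) • A x ≤ ∑ x, A x := Finset.sum_le_sum fun x _ => hle x y
    _ = u := hAobs

theorem stmt_18
    {V : Type*} [AddCommGroup V] [PartialOrder V] [IsOrderedAddMonoid V] [Module ℝ V]
    (hsmul : ∀ (c : ℝ) (x : V), 0 ≤ c → 0 ≤ x → 0 ≤ c • x)
    (u : V) (hu0 : 0 ≤ u) (hune : u ≠ 0)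
    (S : Set (V →ₗ[ℝ] ℝ)) (hS : IsStateSpace u S)
    {ΩA ΩB : Type*} [Fintype ΩA] [Nonempty ΩA] [Fintype ΩB] [Nonempty ΩB]
    (A : ΩA → V) (hAE : ∀ x, 0 ≤ A x ∧ A x ≤ u) (hAobs : (∑ x, A x) = u)
    (B : ΩB → V) (hBE : ∀ y, 0 ≤ B y ∧ B y ≤ u) (hBobs : (∑ y, B y) = u)
    (β : ΩA → (V →ₗ[ℝ] ℝ)) (hβ : ∀ x, β x ∈ S) :
    (∀ (x : ΩA) (y : ΩB), 0 ≤ β x (B y) • A x ∧ β x (B y) • A x ≤ u) ∧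
    (∑ x, ∑ y, β x (B y) • A x) = u ∧
    (∀ x, (∑ y, β x (B y) • A x) = A x) ∧
    (∀ y, 0 ≤ (∑ x, β x (B y) • A x) ∧ (∑ x, β x (B y) • A x) ≤ u) ∧
    (∑ y, ∑ x, β x (B y) • A x) = u :=
  stmt_18_general hsmul u S hS A hAE hAobs B hBE hBobs β hβ
end
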